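/- arXiv:2412.04941 — 3 statements merged into one kernel-verified Lean document; each statement's English description precedes it below -/
import Mathlib

section
/- Let W = span{e₁, e₂, e₃, e₄} ⊆ ℝ⁶ and ω̃ = dx¹∧dx²∧dx³ + dx¹∧dx⁴∧dx⁵ + dx²∧dx⁴∧dx⁶ an alternating 3-form on ℝ⁶. Then W is 2-coisotropic: W^{⊥,2} ⊆ W. -/
/-- The wedge `dx^i ∧ dx^j ∧ dx^k` on `ℝ^n`, as the alternating 3-form sending
`(v₁, v₂, v₃)` to `det (vₐ(x_b))` with `(x₁,x₂,x₃) = (i,j,k)`. -/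
noncomputable def form3 (n : ℕ) (i j k : Fin n) :
    (Fin n → ℝ) [⋀^Fin 3]→ₗ[ℝ] ℝ :=
  (Matrix.detRowAlternating (R := ℝ) (n := Fin 3)).compLinearMap
    (LinearMap.funLeft ℝ ℝ ![i, j, k])

/-!
It suffices to test `v ∈ W^{⊥,2}` against two pairs from `W`: `ω̃(v, e₁, e₄) = v₅` and
`ω̃(v, e₂, e₄) = v₆`, because in every other summand one of `e₁, e₂, e₄` vanishes on all three
columns. Hence `v₅ = v₆ = 0`, i.e. `v ∈ W`. (Indices here are 1-based; in `Fin 6`, `eᵢ` is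
`Pi.single (i - 1) 1`.)
-/

theorem Submodule.mem_span_image_single_one {R ι : Type*} [Semiring R] [Fintype ι]
    [DecidableEq ι] {s : Set ι} {v : ι → R} (hv : ∀ i ∉ s, v i = 0) :
    v ∈ span R ((fun i => Pi.single i 1) '' s) := by
  rw [← Finset.univ_sum_single v]
  refine sum_mem fun i _ => ?_
  by_cases hi : i ∈ s
  · rw [← mul_one (v i), ← smul_eq_mul, Pi.single_smul']
    exact smul_mem _ _ (subset_span ⟨i, hi, rfl⟩)
  · simp [hv i hi]

namespace form3

variable {n : ℕ} {i j k : Fin n}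

theorem apply_eq_det (m : Fin 3 → Fin n → ℝ) :
    form3 n i j k m = (Matrix.of fun a b => m a (![i, j, k] b)).det :=
  rfl

theorem apply_eq_zero_of_row_vanishes (m : Fin 3 → Fin n → ℝ) (r : Fin 3)
    (hi : m r i = 0) (hj : m r j = 0) (hk : m r k = 0) : form3 n i j k m = 0 :=
  Matrix.det_eq_zero_of_row_eq_zero r fun b => by fin_cases b <;> assumption

theorem apply_single_single (hij : i ≠ j) (hik : i ≠ k) (hjk : j ≠ k) (v : Fin n → ℝ) :
    form3 n j k i ![v, Pi.single j (1 : ℝ), Pi.single k 1] = v i := by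
  simp [apply_eq_det, Matrix.det_fin_three, Pi.single_apply, hij, hik, hjk, hjk.symm]

end form3

/-- `W = span{e₁,e₂,e₃,e₄} ⊆ ℝ⁶` is 2-coisotropic for
`ω̃ = dx¹∧dx²∧dx³ + dx¹∧dx⁴∧dx⁵ + dx²∧dx⁴∧dx⁶`: `W^{⊥,2} ⊆ W`. -/
theorem coisotropic_R6 :
    ∀ v : Fin 6 → ℝ,
      (∀ w₁ w₂ : Fin 6 → ℝ,
        w₁ ∈ Submodule.span ℝ {Pi.single (0 : Fin 6) (1 : ℝ),
          Pi.single 1 1, Pi.single 2 1, Pi.single 3 1} →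
        w₂ ∈ Submodule.span ℝ {Pi.single (0 : Fin 6) (1 : ℝ),
          Pi.single 1 1, Pi.single 2 1, Pi.single 3 1} →
        (form3 6 0 1 2 + form3 6 0 3 4 + form3 6 1 3 5) ![v, w₁, w₂] = 0) →
      v ∈ Submodule.span ℝ {Pi.single (0 : Fin 6) (1 : ℝ),
        Pi.single 1 1, Pi.single 2 1, Pi.single 3 1} := by
  intro v hv
  have hv₄ : v 4 = 0 := by
    have := hv (Pi.single 0 1) (Pi.single 3 1) (Submodule.subset_span (by simp))
      (Submodule.subset_span (by simp))
    rwa [AlternatingMap.add_apply, AlternatingMap.add_apply,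
      form3.apply_eq_zero_of_row_vanishes _ 2 rfl rfl rfl,
      form3.apply_single_single (by decide) (by decide) (by decide),
      form3.apply_eq_zero_of_row_vanishes _ 1 rfl rfl rfl, zero_add, add_zero] at this
  have hv₅ : v 5 = 0 := by
    have := hv (Pi.single 1 1) (Pi.single 3 1) (Submodule.subset_span (by simp))
      (Submodule.subset_span (by simp))
    rwa [AlternatingMap.add_apply, AlternatingMap.add_apply,
      form3.apply_eq_zero_of_row_vanishes _ 2 rfl rfl rfl,
      form3.apply_eq_zero_of_row_vanishes _ 1 rfl rfl rfl,
      form3.apply_single_single (by decide) (by decide) (by decide), zero_add, zero_add] at this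
  have hW : ({Pi.single 0 1, Pi.single 1 1, Pi.single 2 1, Pi.single 3 1} : Set (Fin 6 → ℝ)) =
      (fun i => Pi.single i 1) '' {0, 1, 2, 3} := by
    simp [Set.image_insert_eq]
  rw [hW]
  refine Submodule.mem_span_image_single_one fun i hi => ?_
  fin_cases i <;> simp_all
end

section
/- Non-uniqueness of multisymplectic thickening: the pre-3-plectic vector space (ℝ⁴, dx¹∧dx²∧dx³) embeds as a 2-coisotropic subspace with full pullback of the form into two non-isomorphic 3-plectic vector spaces, namely (ℝ⁵, dx¹∧dx²∧dx³ + dx¹∧dx⁴∧dx⁵) and (ℝ⁶, dx¹∧dx²∧dx³ + dx¹∧dx⁴∧dx⁵ + dx²∧dx⁴∧dx⁶); in particular, these two ambient spaces have different dimensions (5 ≠ 6). -/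
/-- The standard linear embedding `ℝ^m → ℝ^n` (extension by zero) for `m ≤ n`. -/
def incl (m n : ℕ) : (Fin m → ℝ) →ₗ[ℝ] (Fin n → ℝ) where
  toFun v := fun j => if h : (j : ℕ) < m then v ⟨j, h⟩ else 0
  map_add' u v := by funext j; by_cases h : (j : ℕ) < m <;> simp [h]
  map_smul' c v := by funext j; by_cases h : (j : ℕ) < m <;> simp [h]

lemma form3_apply (n : ℕ) (i j k : Fin n) (a b c : Fin n → ℝ) :
    form3 n i j k ![a, b, c] =
      a i * b j * c k - a i * b k * c j - a j * b i * c k + a j * b k * c i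
        + a k * b i * c j - a k * b j * c i := by
  have : form3 n i j k ![a, b, c] =
      Matrix.det (Matrix.of fun r s => ![a, b, c] r (![i, j, k] s)) := rfl
  rw [this, Matrix.det_fin_three]
  simp [Matrix.of_apply]

lemma incl45 (v : Fin 4 → ℝ) : incl 4 5 v = ![v 0, v 1, v 2, v 3, 0] := by
  funext j; fin_cases j <;> rfl

lemma incl46 (v : Fin 4 → ℝ) : incl 4 6 v = ![v 0, v 1, v 2, v 3, 0, 0] := by
  funext j; fin_cases j <;> rfl

lemma vec6_at5 (a b c d : ℝ) : (![a, b, c, d, 0, 0] : Fin 6 → ℝ) 5 = 0 := rfl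

lemma incl_apply (m n : ℕ) (v : Fin m → ℝ) (j : Fin n) :
    incl m n v j = if h : (j : ℕ) < m then v ⟨j, h⟩ else 0 := rfl

lemma mem_range_incl {m n : ℕ} (hmn : m ≤ n) (v : Fin n → ℝ)
    (h : ∀ j : Fin n, m ≤ (j : ℕ) → v j = 0) :
    v ∈ LinearMap.range (incl m n) := by
  refine ⟨fun i => v ⟨i, lt_of_lt_of_le i.isLt hmn⟩, ?_⟩
  funext j
  rw [incl_apply]
  split
  · rfl
  · exact (h j (le_of_not_gt ‹_›)).symm

/-- Non-uniqueness of the multisymplectic thickening: the pre-3-plectic space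
`(ℝ⁴, dx¹∧dx²∧dx³)` embeds as a 2-coisotropic subspace, with pullback of the
ambient form equal to `dx¹∧dx²∧dx³`, into the two 3-plectic vector spaces
`(ℝ⁵, dx¹∧dx²∧dx³ + dx¹∧dx⁴∧dx⁵)` and
`(ℝ⁶, dx¹∧dx²∧dx³ + dx¹∧dx⁴∧dx⁵ + dx²∧dx⁴∧dx⁶)`, which have different
dimensions. -/
theorem nonuniqueness_thickening :
    -- ω̃₅ is non-degenerate
    (∀ v : Fin 5 → ℝ, (∀ w₁ w₂ : Fin 5 → ℝ,
        (form3 5 0 1 2 + form3 5 0 3 4) ![v, w₁, w₂] = 0) → v = 0) ∧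
    -- ω̃₆ is non-degenerate
    (∀ v : Fin 6 → ℝ, (∀ w₁ w₂ : Fin 6 → ℝ,
        (form3 6 0 1 2 + form3 6 0 3 4 + form3 6 1 3 5) ![v, w₁, w₂] = 0) →
        v = 0) ∧
    -- the image of ℝ⁴ in ℝ⁵ is 2-coisotropic
    (∀ v : Fin 5 → ℝ, (∀ w₁ w₂ : Fin 5 → ℝ,
        w₁ ∈ LinearMap.range (incl 4 5) → w₂ ∈ LinearMap.range (incl 4 5) →
        (form3 5 0 1 2 + form3 5 0 3 4) ![v, w₁, w₂] = 0) →
      v ∈ LinearMap.range (incl 4 5)) ∧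
    -- the image of ℝ⁴ in ℝ⁶ is 2-coisotropic
    (∀ v : Fin 6 → ℝ, (∀ w₁ w₂ : Fin 6 → ℝ,
        w₁ ∈ LinearMap.range (incl 4 6) → w₂ ∈ LinearMap.range (incl 4 6) →
        (form3 6 0 1 2 + form3 6 0 3 4 + form3 6 1 3 5) ![v, w₁, w₂] = 0) →
      v ∈ LinearMap.range (incl 4 6)) ∧
    -- the pullbacks of both ambient forms are dx¹∧dx²∧dx³ on ℝ⁴
    ((form3 5 0 1 2 + form3 5 0 3 4).compLinearMap (incl 4 5) =
      form3 4 0 1 2) ∧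
    ((form3 6 0 1 2 + form3 6 0 3 4 + form3 6 1 3 5).compLinearMap
        (incl 4 6) = form3 4 0 1 2) ∧
    -- the two thickenings have different dimensions
    Module.finrank ℝ (Fin 5 → ℝ) ≠ Module.finrank ℝ (Fin 6 → ℝ) := by
  refine ⟨?_, ?_, ?_, ?_, ?_, ?_, ?_⟩
  · -- nondegeneracy of ω₅
    intro v h
    have h0 := h ![0,1,0,0,0] ![0,0,1,0,0]
    have h1 := h ![1,0,0,0,0] ![0,0,1,0,0]
    have h2 := h ![1,0,0,0,0] ![0,1,0,0,0]
    have h3 := h ![1,0,0,0,0] ![0,0,0,0,1]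
    have h4 := h ![1,0,0,0,0] ![0,0,0,1,0]
    simp only [AlternatingMap.add_apply, form3_apply] at h0 h1 h2 h3 h4
    norm_num [Fin.isValue] at h0 h1 h2 h3 h4
    funext j
    fin_cases j <;> simp_all
  · -- nondegeneracy of ω₆
    intro v h
    have h0 := h ![0,1,0,0,0,0] ![0,0,1,0,0,0]
    have h1 := h ![1,0,0,0,0,0] ![0,0,1,0,0,0]
    have h2 := h ![1,0,0,0,0,0] ![0,1,0,0,0,0]
    have h3 := h ![1,0,0,0,0,0] ![0,0,0,0,1,0]
    have h4 := h ![1,0,0,0,0,0] ![0,0,0,1,0,0]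
    have h5 := h ![0,1,0,0,0,0] ![0,0,0,1,0,0]
    simp only [AlternatingMap.add_apply, form3_apply] at h0 h1 h2 h3 h4 h5
    norm_num [Fin.isValue] at h0 h1 h2 h3 h4 h5
    funext j
    fin_cases j <;> simp_all
  · -- coisotropic in ℝ⁵
    intro v h
    have h4 := h ![1,0,0,0,0] ![0,0,0,1,0] ⟨![1,0,0,0], by funext j; fin_cases j <;> rfl⟩
      ⟨![0,0,0,1], by funext j; fin_cases j <;> rfl⟩
    simp only [AlternatingMap.add_apply, form3_apply] at h4
    norm_num [Fin.isValue] at h4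
    apply mem_range_incl (by norm_num)
    intro j hj
    fin_cases j <;> simp_all
  · -- coisotropic in ℝ⁶
    intro v h
    have h4 := h ![1,0,0,0,0,0] ![0,0,0,1,0,0]
      ⟨![1,0,0,0], by funext j; fin_cases j <;> rfl⟩
      ⟨![0,0,0,1], by funext j; fin_cases j <;> rfl⟩
    have h5 := h ![0,1,0,0,0,0] ![0,0,0,1,0,0]
      ⟨![0,1,0,0], by funext j; fin_cases j <;> rfl⟩
      ⟨![0,0,0,1], by funext j; fin_cases j <;> rfl⟩
    simp only [AlternatingMap.add_apply, form3_apply] at h4 h5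
    norm_num at h4 h5
    apply mem_range_incl (by norm_num)
    intro j hj
    fin_cases j <;>
      simp_all [show (![(1:ℝ),0,0,0,0,0]) 5 = 0 from rfl,
        show (![(0:ℝ),1,0,0,0,0]) 5 = 0 from rfl,
        show (![(0:ℝ),0,0,1,0,0]) 5 = 0 from rfl]
  · -- pullback ℝ⁵
    ext x
    have hx : x = ![x 0, x 1, x 2] := by
      funext i; fin_cases i <;> rfl
    rw [hx]
    simp only [AlternatingMap.compLinearMap_apply]
    have : (fun i => incl 4 5 (![x 0, x 1, x 2] i)) = ![incl 4 5 (x 0), incl 4 5 (x 1), incl 4 5 (x 2)] := by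
      funext i; fin_cases i <;> rfl
    rw [this]
    simp only [AlternatingMap.add_apply, form3_apply, incl45]
    norm_num [Matrix.cons_val_two, Matrix.cons_val_three, Matrix.cons_val_four]
  · -- pullback ℝ⁶
    ext x
    have hx : x = ![x 0, x 1, x 2] := by
      funext i; fin_cases i <;> rfl
    rw [hx]
    simp only [AlternatingMap.compLinearMap_apply]
    have : (fun i => incl 4 6 (![x 0, x 1, x 2] i)) = ![incl 4 6 (x 0), incl 4 6 (x 1), incl 4 6 (x 2)] := by
      funext i; fin_cases i <;> rfl
    rw [this]
    simp only [AlternatingMap.add_apply, form3_apply, incl46]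
    norm_num [vec6_at5, Matrix.cons_val_two, Matrix.cons_val_three, Matrix.cons_val_four]
  · simp [Module.finrank_fintype_fun_eq_card]
end

section
/- The kernel of the pre-multisymplectic 3-form ω = dρˣ ∧ du ∧ dt − ρˣ dρˣ ∧ dx ∧ dt at a point of ℝ⁵ with coordinates (x, t, u, ρˣ, ρᵗ) is spanned by the two vectors ∂/∂x + ρˣ ∂/∂u and ∂/∂ρᵗ. -/
/-!
ω = dρˣ ∧ (du − c dx) ∧ dt is decomposable: it is the determinant of three linearly independent
covectors. A vector `v` lies in the kernel of such a form exactly when all three covectors vanish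
on `v`: pairing `v` with the vectors dual to two of the covectors recovers the value of the third.
-/

section

variable {R E ι : Type*} [CommRing R] [AddCommGroup E] [Module R E] [Fintype ι] [DecidableEq ι]

theorem detRowAlternating_compLinearMap_apply (φ : E →ₗ[R] ι → R) (w : ι → E) :
    Matrix.detRowAlternating.compLinearMap φ w = (Matrix.of fun a => φ (w a)).det :=
  rfl

theorem forall_detRowAlternating_compLinearMap_eq_zero_iff {φ : E →ₗ[R] Fin 3 → R}
    (hφ : Function.Surjective φ) (v : E) :
    (∀ w₁ w₂ : E, Matrix.detRowAlternating.compLinearMap φ ![v, w₁, w₂] = 0) ↔ φ v = 0 := by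
  simp only [detRowAlternating_compLinearMap_apply]
  constructor
  · intro h
    choose e he using fun i : Fin 3 => hφ (Pi.single i 1)
    have h₀ := h (e 1) (e 2)
    have h₁ := h (e 0) (e 2)
    have h₂ := h (e 0) (e 1)
    simp [Matrix.det_fin_three, he] at h₀ h₁ h₂
    ext i; fin_cases i <;> simpa
  · intro hv w₁ w₂
    exact Matrix.det_eq_zero_of_row_eq_zero 0 fun j => by simp [hv]

end

/-- The factors `(dρˣ, du − c dx, dt)` of `ω`, in the coordinates `(x, t, u, ρˣ, ρᵗ)`. -/
noncomputable def omegaFactors (c : ℝ) : (Fin 5 → ℝ) →ₗ[ℝ] Fin 3 → ℝ :=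
  LinearMap.pi ![LinearMap.proj 3, LinearMap.proj 2 - c • LinearMap.proj 0, LinearMap.proj 1]

theorem omegaFactors_apply (c : ℝ) (v : Fin 5 → ℝ) :
    omegaFactors c v = ![v 3, v 2 - c * v 0, v 1] := by
  ext i; fin_cases i <;> simp [omegaFactors]

theorem form3_sub_smul_form3_eq (c : ℝ) :
    form3 5 3 2 1 - c • form3 5 3 0 1 =
      Matrix.detRowAlternating.compLinearMap (omegaFactors c) := by
  ext w
  simp only [AlternatingMap.sub_apply, AlternatingMap.smul_apply, form3,
    detRowAlternating_compLinearMap_apply, Matrix.det_fin_three, omegaFactors_apply,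
    LinearMap.funLeft_apply, Matrix.of_apply, Matrix.cons_val, smul_eq_mul]
  ring

theorem omegaFactors_surjective (c : ℝ) : Function.Surjective (omegaFactors c) := fun y =>
  ⟨Pi.single 3 (y 0) + Pi.single 2 (y 1) + Pi.single 1 (y 2), by
    ext i; fin_cases i <;> simp [omegaFactors_apply]⟩

theorem ker_omegaFactors (c : ℝ) :
    LinearMap.ker (omegaFactors c) = Submodule.span ℝ
        ({(Pi.single 0 1 : Fin 5 → ℝ) + c • (Pi.single 2 1 : Fin 5 → ℝ),
          (Pi.single 4 1 : Fin 5 → ℝ)} : Set (Fin 5 → ℝ)) := by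
  ext v
  rw [LinearMap.mem_ker, Submodule.mem_span_pair, omegaFactors_apply]
  constructor
  · intro hv
    have h3 : v 3 = 0 := congr_fun hv 0
    have h2 : v 2 = c * v 0 := sub_eq_zero.mp (congr_fun hv 1)
    have h1 : v 1 = 0 := congr_fun hv 2
    refine ⟨v 0, v 4, ?_⟩
    ext i; fin_cases i <;> simp [h1, h2, h3, mul_comm]
  · rintro ⟨a, b, rfl⟩
    ext i; fin_cases i <;> simp [mul_comm]

/-- With coordinates `(x, t, u, ρˣ, ρᵗ)` indexed by `0,…,4` and `ρˣ = c` at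
the chosen point, the kernel of `ω = dρˣ∧du∧dt − c·dρˣ∧dx∧dt` on the tangent
space `ℝ⁵` is exactly `span{∂x + c·∂u, ∂ρᵗ}`. -/
theorem kernel_pre3plectic (c : ℝ) :
    ∀ v : Fin 5 → ℝ,
      (∀ w₁ w₂ : Fin 5 → ℝ,
        (form3 5 3 2 1 - c • form3 5 3 0 1) ![v, w₁, w₂] = 0) ↔
      v ∈ Submodule.span ℝ
        ({(Pi.single 0 1 : Fin 5 → ℝ) + c • (Pi.single 2 1 : Fin 5 → ℝ),
          (Pi.single 4 1 : Fin 5 → ℝ)} : Set (Fin 5 → ℝ)) := by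
  intro v
  rw [form3_sub_smul_form3_eq, forall_detRowAlternating_compLinearMap_eq_zero_iff
    (omegaFactors_surjective c), ← ker_omegaFactors, LinearMap.mem_ker]
end
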